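/- arXiv:2311.18391 — 5 statements merged into one kernel-verified Lean document; each statement's English description precedes it below -/
import Mathlib

section
/- If (K⁽ⁿ⁾)ₙ and (L⁽ⁿ⁾)ₙ are consistent extensions of Markov kernels K and L on a measurable space S respectively, then (K⁽ⁿ⁾L⁽ⁿ⁾)ₙ is a consistent extension of the composition KL. -/
open ProbabilityTheory MeasureTheory

/-- A family of Markov kernels on the powers `Sⁿ` is consistent if it commutes with all
projections `πⁿ_{i₁,…,i_k}` (for `1 ≤ k ≤ n`, repetitions of indices allowed). -/
def IsConsistentFamily {S : Type*} [MeasurableSpace S]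
    (K : ∀ n : ℕ, Kernel (Fin n → S) (Fin n → S)) : Prop :=
  ∀ (n k : ℕ), 1 ≤ k → k ≤ n → ∀ (i : Fin k → Fin n) (x : Fin n → S)
    (B : Set (Fin k → S)), MeasurableSet B →
    K n x ((fun y => y ∘ i) ⁻¹' B) = K k (x ∘ i) B

/-- If `(K⁽ⁿ⁾)` and `(L⁽ⁿ⁾)` are consistent families (in particular consistent extensions of
`K = K⁽¹⁾` and `L = L⁽¹⁾`), then the family of compositions `(K⁽ⁿ⁾L⁽ⁿ⁾)` is a consistent family,
i.e. a consistent extension of `KL = K⁽¹⁾L⁽¹⁾`. -/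
theorem stmt3 {S : Type*} [MeasurableSpace S]
    (K L : ∀ n : ℕ, Kernel (Fin n → S) (Fin n → S))
    [∀ n, IsMarkovKernel (K n)] [∀ n, IsMarkovKernel (L n)]
    (hK : IsConsistentFamily K) (hL : IsConsistentFamily L) :
    IsConsistentFamily (fun n => (L n) ∘ₖ (K n)) := by
  intro n k hk hkn i x B hB
  have hmeas : Measurable (fun y : Fin n → S => y ∘ i) :=
    measurable_pi_lambda _ fun j => measurable_pi_apply (i j)
  have hmap : (K n x).map (fun y => y ∘ i) = K k (x ∘ i) := by
    ext A hA
    rw [Measure.map_apply hmeas hA]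
    exact hK n k hk hkn i x A hA
  have hBpre : MeasurableSet ((fun y : Fin n → S => y ∘ i) ⁻¹' B) := hmeas hB
  rw [Kernel.comp_apply' _ _ _ hBpre, Kernel.comp_apply' _ _ _ hB]
  calc ∫⁻ y, (L n) y ((fun y => y ∘ i) ⁻¹' B) ∂(K n x)
      = ∫⁻ y, (L k) (y ∘ i) B ∂(K n x) := by
        refine lintegral_congr fun y => hL n k hk hkn i y B hB
    _ = ∫⁻ z, (L k) z B ∂((K n x).map (fun y => y ∘ i)) := by
        rw [lintegral_map (Kernel.measurable_coe _ hB) hmeas]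
    _ = ∫⁻ z, (L k) z B ∂(K k (x ∘ i)) := by rw [hmap]
end

section
/- Let (K_t)_{t∈J} be a family of Markov kernels on a compact metric space S, with J ⊆ (0,∞) and inf J = 0. The following are equivalent: (i) for every continuous f : S → ℝ, ‖K_t f − f‖_∞ → 0 as t → 0+; (ii) for every ε > 0, K_t(x, B(x,ε)ᶜ) → 0 as t → 0+, uniformly in x ∈ S; (iii) W₁(K_t(x,·), δ_x) → 0 as t → 0+, uniformly in x ∈ S. -/
/-!
(i) ⇒ (ii): apply (i) to the finitely many truncated distances `min (d(·, c)) (ε/2)`, `c` in a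
fine net; by Markov's inequality, `∫ min (d(·, c)) (ε/2) dK_t(x)` being small for `c` near `x`
forces `K_t(x, B(x, ε)ᶜ)` to be small.

(ii) ⇒ (i) and (ii) ⇒ (iii): split `|∫ f dK_t(x) − f x|` over `B(x, r)`, where `f` stays close
to `f x` (uniform continuity, resp. the Lipschitz bound), and its complement, which has small
mass while `f` is bounded there by compactness.

(iii) ⇒ (ii): `min (d(·, x)) ε` is 1-Lipschitz, vanishes at `x` and equals `ε` off `B(x, ε)`,
so `ε K_t(x, B(x, ε)ᶜ) ≤ W₁(K_t(x, ·), δ_x)`.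
-/

open MeasureTheory ProbabilityTheory Filter

/-- The Wasserstein-1 (Kantorovich-Rubinstein) distance, defined by duality as the
supremum of `|∫ f dμ − ∫ f dν|` over 1-Lipschitz functions `f`. -/
noncomputable def W1 {S : Type*} [MetricSpace S] [MeasurableSpace S]
    (μ ν : Measure S) : ℝ :=
  ⨆ f : {f : S → ℝ // LipschitzWith 1 f}, |∫ x, f.1 x ∂μ - ∫ x, f.1 x ∂ν|

open Metric Set Topology

section Pointwise

variable {S : Type*} [MeasurableSpace S] {μ : Measure S} [IsProbabilityMeasure μ]

lemma integral_le_add_mul_measureReal_compl {g : S → ℝ}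
    (hg : Integrable g μ) {s : Set S} (hs : MeasurableSet s) {a b : ℝ}
    (h_in : ∀ y ∈ s, g y ≤ a) (h_out : ∀ y, g y ≤ a + b) :
    ∫ y, g y ∂μ ≤ a + b * μ.real sᶜ := by
  have h_ind : Integrable (sᶜ.indicator fun _ => b) μ :=
    (integrable_const b).indicator hs.compl
  have h_le : ∀ y, g y ≤ a + sᶜ.indicator (fun _ => b) y := by
    intro y
    by_cases hy : y ∈ s
    · simpa [hy] using h_in y hy
    · simpa [hy] using h_out y
  calc ∫ y, g y ∂μ ≤ ∫ y, (a + sᶜ.indicator (fun _ => b) y) ∂μ :=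
        integral_mono hg ((integrable_const a).add h_ind) h_le
    _ = a + b * μ.real sᶜ := by
        rw [integral_add (integrable_const a) h_ind, integral_indicator_const b hs.compl]
        simp [mul_comm]

lemma abs_integral_sub_le_add_mul_measureReal_compl {f : S → ℝ} {x : S}
    (hf : Integrable f μ) {s : Set S} (hs : MeasurableSet s) {a b : ℝ}
    (h_in : ∀ y ∈ s, |f y - f x| ≤ a) (h_out : ∀ y, |f y - f x| ≤ a + b) :
    |∫ y, f y ∂μ - f x| ≤ a + b * μ.real sᶜ := by
  have h_sub : ∫ y, f y ∂μ - f x = ∫ y, (f y - f x) ∂μ := by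
    rw [integral_sub hf (integrable_const _), integral_const, probReal_univ, one_smul]
  calc |∫ y, f y ∂μ - f x| ≤ ∫ y, |f y - f x| ∂μ := by
        rw [h_sub]; exact abs_integral_le_integral_abs
    _ ≤ a + b * μ.real sᶜ :=
        integral_le_add_mul_measureReal_compl (hf.sub (integrable_const _)).abs hs h_in h_out

end Pointwise

lemma LipschitzWith.abs_sub_le_dist {S : Type*} [PseudoMetricSpace S] {f : S → ℝ}
    (hf : LipschitzWith 1 f) (y x : S) : |f y - f x| ≤ dist y x := by
  simpa [Real.dist_eq] using hf.dist_le_mul y x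

lemma W1_dirac_le {S : Type*} [MetricSpace S] [MeasurableSpace S] [MeasurableSingletonClass S]
    {μ : Measure S} {x : S} {C : ℝ}
    (hC : ∀ f : S → ℝ, LipschitzWith 1 f → |∫ y, f y ∂μ - f x| ≤ C) :
    W1 μ (Measure.dirac x) ≤ C := by
  have : Nonempty {f : S → ℝ // LipschitzWith 1 f} := ⟨⟨0, LipschitzWith.const' 0⟩⟩
  exact ciSup_le fun f => by rw [integral_dirac]; exact hC f.1 f.2

lemma Continuous.integrable_of_compactSpace {X : Type*} [TopologicalSpace X] [CompactSpace X]
    [MeasurableSpace X] [OpensMeasurableSpace X] {μ : Measure X} [IsFiniteMeasure μ]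
    {f : X → ℝ} (hf : Continuous f) : Integrable f μ :=
  hf.integrable_of_hasCompactSupport (.of_compactSpace f)

section Compact

variable {S : Type*} [MetricSpace S] [CompactSpace S] [MeasurableSpace S] [BorelSpace S]
  {μ : Measure S} [IsProbabilityMeasure μ]

lemma mul_measureReal_compl_ball_le_integral_min_dist {x c : S} {r ε : ℝ} (hr : 0 ≤ r)
    (h : dist x c + r ≤ ε) :
    r * μ.real (ball x ε)ᶜ ≤ ∫ y, min (dist y c) r ∂μ := by
  have h_int : Integrable (fun y => min (dist y c) r) μ :=
    (by fun_prop : Continuous fun y => min (dist y c) r).integrable_of_compactSpace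
  have h_far : (ball x ε)ᶜ ⊆ {y | r ≤ min (dist y c) r} := fun y hy => by
    simp only [mem_compl_iff, mem_ball, not_lt] at hy
    simp only [mem_ofPred_eq, le_min_iff, le_refl, and_true]
    linarith [dist_triangle y c x, dist_comm x c]
  calc r * μ.real (ball x ε)ᶜ ≤ r * μ.real {y | r ≤ min (dist y c) r} := by
        gcongr; finiteness
    _ ≤ ∫ y, min (dist y c) r ∂μ :=
        mul_meas_ge_le_integral_of_nonneg
          (.of_forall fun y => le_min dist_nonneg hr) h_int r

lemma abs_integral_sub_le_diam {f : S → ℝ} (hf : LipschitzWith 1 f) (x : S) :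
    |∫ y, f y ∂μ - f x| ≤ diam (univ : Set S) := by
  have h_diam : ∀ y, |f y - f x| ≤ diam (univ : Set S) + 0 := fun y =>
    (hf.abs_sub_le_dist y x).trans <| by
      simpa using dist_le_diam_of_mem isCompact_univ.isBounded (mem_univ y) (mem_univ x)
  simpa using abs_integral_sub_le_add_mul_measureReal_compl (μ := μ)
    hf.continuous.integrable_of_compactSpace .univ
    (fun y _ => by simpa using h_diam y) h_diam

lemma abs_integral_sub_le_W1_dirac {f : S → ℝ} (hf : LipschitzWith 1 f) (x : S) :
    |∫ y, f y ∂μ - f x| ≤ W1 μ (Measure.dirac x) := by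
  -- without this bound the supremum defining `W1` would be the junk value `0`
  have h_bdd : BddAbove (range fun f : {f : S → ℝ // LipschitzWith 1 f} =>
      |∫ y, f.1 y ∂μ - ∫ y, f.1 y ∂(Measure.dirac x)|) := by
    refine ⟨diam (univ : Set S), forall_mem_range.2 fun f => ?_⟩
    rw [integral_dirac]; exact abs_integral_sub_le_diam f.2 x
  simpa only [W1, integral_dirac] using le_ciSup h_bdd ⟨f, hf⟩

end Compact

lemma Set.Finite.exists_pos_forall_le {ι : Type*} {T : Set ι} (hT : T.Finite) {δ : ι → ℝ}
    (hδ : ∀ i ∈ T, 0 < δ i) : ∃ δ₀ > 0, ∀ i ∈ T, δ₀ ≤ δ i := by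
  have h_small : ∀ᶠ δ₀ in 𝓝[>] (0 : ℝ), ∀ i ∈ T, δ₀ ≤ δ i :=
    hT.eventually_all.2 fun i hi => Filter.mem_of_superset (Ioo_mem_nhdsGT (hδ i hi))
      fun _ h => h.2.le
  obtain ⟨δ₀, h_le, h_pos⟩ := (h_small.and self_mem_nhdsWithin).exists
  exact ⟨δ₀, h_pos, h_le⟩

section Uniform

variable {S : Type*} [MetricSpace S] [MeasurableSpace S]

def StronglyContinuousAtZero (J : Set ℝ) (K : ℝ → Kernel S S) : Prop :=
  ∀ f : C(S, ℝ), ∀ ε > (0:ℝ), ∃ δ > (0:ℝ), ∀ t ∈ J, t < δ →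
    ∀ x : S, |(∫ y, f y ∂(K t x)) - f x| ≤ ε

def ConcentratesUniformly (J : Set ℝ) (K : ℝ → Kernel S S) : Prop :=
  ∀ ε > (0:ℝ), ∀ η > (0:ℝ), ∃ δ > (0:ℝ), ∀ t ∈ J, t < δ →
    ∀ x : S, (K t x).real (ball x ε)ᶜ ≤ η

def W1TendstoDiracUniformly (J : Set ℝ) (K : ℝ → Kernel S S) : Prop :=
  ∀ η > (0:ℝ), ∃ δ > (0:ℝ), ∀ t ∈ J, t < δ → ∀ x : S, W1 (K t x) (Measure.dirac x) ≤ η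

variable [CompactSpace S] [BorelSpace S] {J : Set ℝ} {K : ℝ → Kernel S S}
  (hK : ∀ t ∈ J, IsMarkovKernel (K t))
include hK

lemma ConcentratesUniformly.of_stronglyContinuousAtZero (h : StronglyContinuousAtZero J K) :
    ConcentratesUniformly J K := by
  intro ε hε η hη
  set ρ := min (ε / 2) (η * ε / 4)
  have hρ : 0 < ρ := by positivity
  obtain ⟨T, -, hT, hT_cover⟩ := finite_cover_balls_of_compact (isCompact_univ (X := S)) hρ
  choose δ hδ hδ_spec using fun c : S =>
    h ⟨fun y => min (dist y c) (ε / 2), by fun_prop⟩ (η * ε / 4) (by positivity)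
  obtain ⟨δ₀, hδ₀, hδ₀_le⟩ := hT.exists_pos_forall_le fun c _ => hδ c
  refine ⟨δ₀, hδ₀, fun t ht htδ x => ?_⟩
  have := hK t ht
  obtain ⟨c, hcT, hxc⟩ : ∃ c ∈ T, dist x c < ρ := by simpa using hT_cover (mem_univ x)
  have h_close : |∫ y, min (dist y c) (ε / 2) ∂(K t x) - min (dist x c) (ε / 2)| ≤ η * ε / 4 :=
    hδ_spec c t ht (htδ.trans_le (hδ₀_le c hcT)) x
  have h_markov := mul_measureReal_compl_ball_le_integral_min_dist (μ := K t x)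
    (half_pos hε).le (show dist x c + ε / 2 ≤ ε by linarith [min_le_left (ε / 2) (η * ε / 4)])
  refine le_of_mul_le_mul_left ?_ (half_pos hε)
  calc ε / 2 * (K t x).real (ball x ε)ᶜ ≤ min (dist x c) (ε / 2) + η * ε / 4 := by
        linarith [le_abs_self (∫ y, min (dist y c) (ε / 2) ∂(K t x) - min (dist x c) (ε / 2))]
    _ ≤ ε / 2 * η := by linarith [min_le_left (dist x c) (ε / 2), min_le_right (ε / 2) (η * ε / 4)]

lemma StronglyContinuousAtZero.of_concentratesUniformly (h : ConcentratesUniformly J K) :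
    StronglyContinuousAtZero J K := by
  intro f ε hε
  obtain ⟨r, hr, hf_unif⟩ := Metric.uniformContinuous_iff.1
    (CompactSpace.uniformContinuous_of_continuous f.continuous) (ε / 2) (half_pos hε)
  set M := 2 * ‖f‖ + 1
  have hM : 0 < M := by positivity
  obtain ⟨δ, hδ, hδ_spec⟩ := h r hr (ε / 2 / M) (by positivity)
  refine ⟨δ, hδ, fun t ht htδ x => ?_⟩
  have := hK t ht
  have h_near : ∀ y ∈ ball x r, |f y - f x| ≤ ε / 2 := fun y hy => by
    simpa [Real.dist_eq] using (hf_unif hy).le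
  have h_far : ∀ y, |f y - f x| ≤ ε / 2 + M := fun y => by
    have hfy := f.norm_coe_le_norm y
    have hfx := f.norm_coe_le_norm x
    rw [Real.norm_eq_abs] at hfy hfx
    linarith [abs_sub (f y) (f x)]
  have h_mass : M * (K t x).real (ball x r)ᶜ ≤ ε / 2 := (le_div_iff₀' hM).1 (hδ_spec t ht htδ x)
  calc |∫ y, f y ∂(K t x) - f x| ≤ ε / 2 + M * (K t x).real (ball x r)ᶜ :=
        abs_integral_sub_le_add_mul_measureReal_compl f.continuous.integrable_of_compactSpace
          measurableSet_ball h_near h_far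
    _ ≤ ε := by linarith

lemma W1TendstoDiracUniformly.of_concentratesUniformly (h : ConcentratesUniformly J K) :
    W1TendstoDiracUniformly J K := by
  intro η hη
  set M := diam (univ : Set S) + 1
  have hM : 0 < M := by positivity
  obtain ⟨δ, hδ, hδ_spec⟩ := h (η / 2) (half_pos hη) (η / 2 / M) (by positivity)
  refine ⟨δ, hδ, fun t ht htδ x => W1_dirac_le fun f hf => ?_⟩
  have := hK t ht
  have h_near : ∀ y ∈ ball x (η / 2), |f y - f x| ≤ η / 2 := fun y hy =>
    (hf.abs_sub_le_dist y x).trans (mem_ball.1 hy).le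
  have h_far : ∀ y, |f y - f x| ≤ η / 2 + M := fun y =>
    (hf.abs_sub_le_dist y x).trans <| by
      linarith [dist_le_diam_of_mem isCompact_univ.isBounded (mem_univ y) (mem_univ x)]
  have h_mass : M * (K t x).real (ball x (η / 2))ᶜ ≤ η / 2 :=
    (le_div_iff₀' hM).1 (hδ_spec t ht htδ x)
  calc |∫ y, f y ∂(K t x) - f x| ≤ η / 2 + M * (K t x).real (ball x (η / 2))ᶜ :=
        abs_integral_sub_le_add_mul_measureReal_compl hf.continuous.integrable_of_compactSpace
          measurableSet_ball h_near h_far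
    _ ≤ η := by linarith

lemma ConcentratesUniformly.of_w1TendstoDiracUniformly (h : W1TendstoDiracUniformly J K) :
    ConcentratesUniformly J K := by
  intro ε hε η hη
  obtain ⟨δ, hδ, hδ_spec⟩ := h (ε * η) (by positivity)
  refine ⟨δ, hδ, fun t ht htδ x => le_of_mul_le_mul_left ?_ hε⟩
  have := hK t ht
  have h_lip : LipschitzWith 1 fun y => min (dist y x) ε := (LipschitzWith.dist_left x).min_const ε
  calc ε * (K t x).real (ball x ε)ᶜ ≤ ∫ y, min (dist y x) ε ∂(K t x) :=
        mul_measureReal_compl_ball_le_integral_min_dist hε.le (by simp)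
    _ ≤ |∫ y, min (dist y x) ε ∂(K t x) - min (dist x x) ε| := by
        simpa [hε.le] using le_abs_self _
    _ ≤ W1 (K t x) (Measure.dirac x) := abs_integral_sub_le_W1_dirac h_lip x
    _ ≤ ε * η := hδ_spec t ht htδ x

end Uniform

theorem stmt9_general {S : Type*} [MetricSpace S] [CompactSpace S]
    [MeasurableSpace S] [BorelSpace S]
    (J : Set ℝ)
    (K : ℝ → Kernel S S) (hK : ∀ t ∈ J, IsMarkovKernel (K t)) :
    List.TFAE
      [ ∀ f : C(S, ℝ), ∀ ε > (0:ℝ), ∃ δ > (0:ℝ), ∀ t ∈ J, t < δ →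
          ∀ x : S, |(∫ y, f y ∂(K t x)) - f x| ≤ ε,
        ∀ ε > (0:ℝ), ∀ η > (0:ℝ), ∃ δ > (0:ℝ), ∀ t ∈ J, t < δ →
          ∀ x : S, ((K t x) (Metric.ball x ε)ᶜ).toReal ≤ η,
        ∀ η > (0:ℝ), ∃ δ > (0:ℝ), ∀ t ∈ J, t < δ →
          ∀ x : S, W1 (K t x) (Measure.dirac x) ≤ η ] := by
  tfae_have 1 → 2 := ConcentratesUniformly.of_stronglyContinuousAtZero hK
  tfae_have 2 → 1 := StronglyContinuousAtZero.of_concentratesUniformly hK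
  tfae_have 2 → 3 := W1TendstoDiracUniformly.of_concentratesUniformly hK
  tfae_have 3 → 2 := ConcentratesUniformly.of_w1TendstoDiracUniformly hK
  tfae_finish

/-- For a family of Markov kernels `(K_t)_{t ∈ J}` on a compact metric space, with
`J ⊆ (0,∞)` and `inf J = 0`, the following are equivalent:
(i) `‖K_t f − f‖_∞ → 0` as `t → 0+` for every continuous `f`;
(ii) for every `ε > 0`, `K_t(x, B(x,ε)ᶜ) → 0` as `t → 0+`, uniformly in `x`;
(iii) `W₁(K_t(x,·), δ_x) → 0` as `t → 0+`, uniformly in `x`. -/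
theorem stmt9 {S : Type*} [MetricSpace S] [CompactSpace S]
    [MeasurableSpace S] [BorelSpace S]
    (J : Set ℝ) (hJ : J ⊆ Set.Ioi 0) (hinf : sInf J = 0) (hne : J.Nonempty)
    (K : ℝ → Kernel S S) (hK : ∀ t ∈ J, IsMarkovKernel (K t)) :
    List.TFAE
      [ ∀ f : C(S, ℝ), ∀ ε > (0:ℝ), ∃ δ > (0:ℝ), ∀ t ∈ J, t < δ →
          ∀ x : S, |(∫ y, f y ∂(K t x)) - f x| ≤ ε,
        ∀ ε > (0:ℝ), ∀ η > (0:ℝ), ∃ δ > (0:ℝ), ∀ t ∈ J, t < δ →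
          ∀ x : S, ((K t x) (Metric.ball x ε)ᶜ).toReal ≤ η,
        ∀ η > (0:ℝ), ∃ δ > (0:ℝ), ∀ t ∈ J, t < δ →
          ∀ x : S, W1 (K t x) (Measure.dirac x) ≤ η ] :=
  stmt9_general J K hK
end

section
/- Let K be a Markov kernel on ℝ such that K maps C₀(ℝ) into C₀(ℝ) and K maps bounded non-decreasing functions to bounded non-decreasing functions. Then for all a > 0: K(x, [−a, ∞)) → 0 as x → −∞, and K(x, (−∞, a]) → 0 as x → +∞. -/
/-!
Stochastic monotonicity makes `x ↦ K(x, (b, ∞))` non-decreasing for every `b`, so for `x ≤ x₀`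
`K(x, [c, ∞)) ≤ K(x, [c, b]) + K(x₀, (b, ∞))`. The second term is small once `b` is large, and the
first tends to `0` as `x → -∞` because `K` maps a compactly supported continuous function
dominating `1_[c, b]` into `C₀(ℝ)`. The limit at `+∞` is the same argument in the order dual.
-/

open MeasureTheory ProbabilityTheory ZeroAtInfty Filter Set Topology

theorem IsCompact.tendsto_measure_of_forall_tendsto_integral {ι X : Type*} [TopologicalSpace X]
    [T2Space X] [LocallyCompactSpace X] [MeasurableSpace X] [OpensMeasurableSpace X]
    {μ : ι → Measure X} [∀ i, IsFiniteMeasure (μ i)] {l : Filter ι}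
    (h : ∀ f : C₀(X, ℝ), Tendsto (fun i => ∫ x, f x ∂μ i) l (𝓝 0)) {K : Set X}
    (hK : IsCompact K) : Tendsto (fun i => μ i K) l (𝓝 0) := by
  obtain ⟨f, hfK, -, hf_supp, hf01⟩ :=
    exists_continuous_one_zero_of_isCompact hK isClosed_empty (disjoint_empty K)
  have hKf : K.indicator 1 ≤ f := fun x => by
    by_cases hx : x ∈ K
    · simp [hx, hfK hx]
    · simp [hx, (hf01 x).1]
  rw [← ENNReal.tendsto_toReal_zero_iff]
  refine squeeze_zero (fun i => ENNReal.toReal_nonneg) (fun i => ?_)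
    (h ⟨f, hf_supp.is_zero_at_infty⟩)
  calc (μ i K).toReal = ∫ x, K.indicator 1 x ∂μ i :=
        (integral_indicator_one hK.measurableSet).symm
    _ ≤ ∫ x, f x ∂μ i := integral_mono ((integrable_const 1).indicator hK.measurableSet)
      (f.continuous.integrable_of_hasCompactSupport hf_supp) hKf

def StochasticallyMonotone {α β : Type*} [Preorder α] [Preorder β] [MeasurableSpace β]
    (μ : α → Measure β) : Prop :=
  ∀ f : β → ℝ, Measurable f → Monotone f → (∃ M, ∀ x, |f x| ≤ M) →
    Monotone (fun x => ∫ y, f y ∂(μ x))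

theorem IsUpperSet.monotone_indicator_one {β M : Type*} [Preorder β] [Preorder M] [Zero M] [One M]
    [ZeroLEOneClass M] {s : Set β} (hs : IsUpperSet s) : Monotone (s.indicator (1 : β → M)) := by
  intro u v huv
  by_cases hu : u ∈ s
  · simp [hu, hs huv hu]
  · simp only [indicator_of_notMem hu]
    exact indicator_nonneg (fun _ _ => zero_le_one) v

namespace StochasticallyMonotone

variable {α β : Type*} [Preorder α] [Preorder β] [MeasurableSpace β] {μ : α → Measure β}
  {s : Set β}

theorem monotone_measure [∀ x, IsFiniteMeasure (μ x)] (h : StochasticallyMonotone μ)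
    (hs : IsUpperSet s) (hsm : MeasurableSet s) : Monotone fun x => μ x s := by
  intro x y hxy
  have hle := h _ (measurable_one.indicator hsm) hs.monotone_indicator_one
    ⟨1, fun y => by by_cases hy : y ∈ s <;> simp [hy]⟩ hxy
  simp only [integral_indicator_one hsm] at hle
  exact (ENNReal.toReal_le_toReal (measure_ne_top _ _) (measure_ne_top _ _)).1 hle

theorem antitone_measure [∀ x, IsProbabilityMeasure (μ x)] (h : StochasticallyMonotone μ)
    (hs : IsLowerSet s) (hsm : MeasurableSet s) : Antitone fun x => μ x s := by
  intro x y hxy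
  have h_compl (z : α) : μ z s = 1 - μ z sᶜ := by
    rw [← prob_compl_eq_one_sub hsm.compl, compl_compl]
  simp only [h_compl]
  exact tsub_le_tsub_left (h.monotone_measure hs.compl hsm.compl hxy) 1

end StochasticallyMonotone

section Tails

variable {α β : Type*} [Preorder α] [Nonempty α] [LinearOrder β] [TopologicalSpace β]
  [OrderClosedTopology β] [MeasurableSpace β] [OpensMeasurableSpace β]
  {μ : α → Measure β} [∀ x, IsFiniteMeasure (μ x)]

theorem tendsto_measure_Ici_atBot_of_monotone [(atTop : Filter β).IsCountablyGenerated]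
    (hmono : ∀ b, Monotone fun x => μ x (Ioi b))
    (hIcc : ∀ c d, Tendsto (fun x => μ x (Icc c d)) atBot (𝓝 0)) (c : β) :
    Tendsto (fun x => μ x (Ici c)) atBot (𝓝 0) := by
  have : Nonempty β := ⟨c⟩
  rw [ENNReal.tendsto_nhds_zero]
  intro ε hε
  obtain ⟨x₀⟩ := ‹Nonempty α›
  have htail : Tendsto (fun b => μ x₀ (Ioi b)) atTop (𝓝 0) := by
    have hempty : ⋂ b : β, Ioi b = ∅ := iInter_eq_empty_iff.2 fun y => ⟨y, lt_irrefl y⟩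
    simpa [hempty, Function.comp_def] using tendsto_measure_iInter_atTop (μ := μ x₀)
      (fun b => measurableSet_Ioi.nullMeasurableSet) antitone_Ioi ⟨c, measure_ne_top _ _⟩
  obtain ⟨b, hb⟩ :=
    (ENNReal.tendsto_nhds_zero.1 htail (ε / 2) (ENNReal.half_pos hε.ne')).exists
  filter_upwards [eventually_le_atBot x₀,
    ENNReal.tendsto_nhds_zero.1 (hIcc c b) (ε / 2) (ENNReal.half_pos hε.ne')] with x hx hx'
  calc μ x (Ici c) ≤ μ x (Icc c b ∪ Ioi b) := measure_mono Ici_subset_Icc_union_Ioi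
    _ ≤ μ x (Icc c b) + μ x (Ioi b) := measure_union_le _ _
    _ ≤ ε / 2 + ε / 2 := add_le_add hx' ((hmono b hx).trans hb)
    _ = ε := ENNReal.add_halves ε

theorem tendsto_measure_Iic_atTop_of_antitone [(atBot : Filter β).IsCountablyGenerated]
    (hanti : ∀ b, Antitone fun x => μ x (Iio b))
    (hIcc : ∀ c d, Tendsto (fun x => μ x (Icc c d)) atTop (𝓝 0)) (c : β) :
    Tendsto (fun x => μ x (Iic c)) atTop (𝓝 0) := by
  have (x : αᵒᵈ) : IsFiniteMeasure (α := βᵒᵈ) (μ (OrderDual.ofDual x)) :=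
    inferInstanceAs (IsFiniteMeasure (μ _))
  refine tendsto_measure_Ici_atBot_of_monotone (α := αᵒᵈ) (β := βᵒᵈ)
    (μ := fun x => μ (OrderDual.ofDual x)) (fun b => (hanti b).dual_left) (fun c d => ?_) c
  have h := hIcc (OrderDual.ofDual d) (OrderDual.ofDual c)
  rw [Icc_ofDual] at h
  exact h

end Tails

/-- Let `K` be a Markov kernel on `ℝ` that maps `C₀(ℝ)` into `C₀(ℝ)` and maps bounded
non-decreasing Borel functions to non-decreasing functions. Then for every `a > 0`,
`K(x, [−a,∞)) → 0` as `x → −∞` and `K(x, (−∞,a]) → 0` as `x → +∞`. -/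
theorem stmt10 (κ : Kernel ℝ ℝ) [IsMarkovKernel κ]
    (hC0 : ∀ f : C₀(ℝ, ℝ), Continuous (fun x => ∫ y, f y ∂(κ x)) ∧
      Tendsto (fun x => ∫ y, f y ∂(κ x)) (cocompact ℝ) (nhds 0))
    (hmono : ∀ f : ℝ → ℝ, Measurable f → Monotone f → (∃ M, ∀ x, |f x| ≤ M) →
      Monotone (fun x => ∫ y, f y ∂(κ x))) :
    ∀ a > (0:ℝ),
      Tendsto (fun x => (κ x (Set.Ici (-a))).toReal) atBot (nhds 0) ∧
      Tendsto (fun x => (κ x (Set.Iic a)).toReal) atTop (nhds 0) := by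
  intro a _
  have hκ : StochasticallyMonotone κ := hmono
  have hIcc (c d : ℝ) : Tendsto (fun x => κ x (Icc c d)) (atBot ⊔ atTop) (𝓝 0) := by
    rw [← cocompact_eq_atBot_atTop]
    exact isCompact_Icc.tendsto_measure_of_forall_tendsto_integral fun f => (hC0 f).2
  rw [ENNReal.tendsto_toReal_zero_iff, ENNReal.tendsto_toReal_zero_iff]
  exact ⟨tendsto_measure_Ici_atBot_of_monotone
      (fun b => hκ.monotone_measure (isUpperSet_Ioi b) measurableSet_Ioi)
      (fun c d => (hIcc c d).mono_left le_sup_left) (-a),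
    tendsto_measure_Iic_atTop_of_antitone
      (fun b => hκ.antitone_measure (isLowerSet_Iio b) measurableSet_Iio)
      (fun c d => (hIcc c d).mono_left le_sup_right) a⟩
end

section
/- Let K be a Markov kernel on ℝ that maps C₀(ℝ) into C₀(ℝ) and maps bounded non-decreasing functions to bounded non-decreasing functions. Then for all u, v ∈ ℝ and every continuous f : ℝ → ℝ with f(x) → u as x → −∞ and f(x) → v as x → +∞, the function Kf is continuous with Kf(x) → u as x → −∞ and Kf(x) → v as x → +∞. -/
/-!
Put `Φ = Kφ` for the sigmoid `φ` and `Ψ t = K(φ(· - t))`. Each `Ψ t` is non-decreasing with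
values in `[0, 1]`, and `Φ - Ψ t = K(φ - φ(· - t))` lies in `C₀` because `φ - φ(· - t)` does.
By dominated convergence `Ψ t → 1` pointwise as `t → -∞`, and since `Ψ t` is non-decreasing the
convergence is uniform on every half-line `[a, ∞)`; likewise `Ψ t → 0` uniformly on `(-∞, b]`
as `t → +∞`. Exchanging limits, `Φ` is continuous with limits `0` and `1`, and then
`Kf = K(f - u - (v - u) φ) + u + (v - u) Φ` with `f - u - (v - u) φ ∈ C₀`.
-/

open MeasureTheory ProbabilityTheory ZeroAtInfty Filter Topology Set

-- The paper's `C_{u,v}(ℝ)`.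
def ContinuousLimits (u v : ℝ) (f : ℝ → ℝ) : Prop :=
  Continuous f ∧ Tendsto f atBot (𝓝 u) ∧ Tendsto f atTop (𝓝 v)

namespace ContinuousLimits

variable {u v u' v' : ℝ} {f g : ℝ → ℝ}

lemma const (c : ℝ) : ContinuousLimits c c fun _ => c :=
  ⟨continuous_const, tendsto_const_nhds, tendsto_const_nhds⟩

lemma add (hf : ContinuousLimits u v f) (hg : ContinuousLimits u' v' g) :
    ContinuousLimits (u + u') (v + v') fun x => f x + g x :=
  ⟨hf.1.add hg.1, hf.2.1.add hg.2.1, hf.2.2.add hg.2.2⟩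

lemma sub (hf : ContinuousLimits u v f) (hg : ContinuousLimits u' v' g) :
    ContinuousLimits (u - u') (v - v') fun x => f x - g x :=
  ⟨hf.1.sub hg.1, hf.2.1.sub hg.2.1, hf.2.2.sub hg.2.2⟩

lemma const_mul (hf : ContinuousLimits u v f) (c : ℝ) :
    ContinuousLimits (c * u) (c * v) fun x => c * f x :=
  ⟨continuous_const.mul hf.1, hf.2.1.const_mul c, hf.2.2.const_mul c⟩

lemma comp_sub_const (hf : ContinuousLimits u v f) (t : ℝ) :
    ContinuousLimits u v fun x => f (x - t) :=
  ⟨hf.1.comp (continuous_sub_right t),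
    hf.2.1.comp (tendsto_atBot_add_const_right atBot (-t) tendsto_id),
    hf.2.2.comp (tendsto_atTop_add_const_right atTop (-t) tendsto_id)⟩

lemma mem_Icc_of_monotone (hf : ContinuousLimits u v f) (hmono : Monotone f) (x : ℝ) :
    f x ∈ Icc u v :=
  ⟨hmono.le_of_tendsto hf.2.1 x, hmono.ge_of_tendsto hf.2.2 x⟩

lemma abs_le_of_monotone (hf : ContinuousLimits u v f) (hmono : Monotone f) (x : ℝ) :
    |f x| ≤ max |u| |v| := by
  obtain ⟨hu, hv⟩ := hf.mem_Icc_of_monotone hmono x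
  exact abs_le.2 ⟨by linarith [le_max_left |u| |v|, neg_abs_le u],
    by linarith [le_max_right |u| |v|, le_abs_self v]⟩

lemma integrable_of_monotone (hf : ContinuousLimits u v f) (hmono : Monotone f)
    (μ : Measure ℝ) [IsFiniteMeasure μ] : Integrable f μ :=
  .of_bound hf.1.aestronglyMeasurable _ (.of_forall (hf.abs_le_of_monotone hmono))

lemma tendsto_cocompact (hf : ContinuousLimits 0 0 f) : Tendsto f (cocompact ℝ) (𝓝 0) := by
  rw [cocompact_eq_atBot_atTop]
  exact hf.2.1.sup hf.2.2

lemma integrable (hf : ContinuousLimits 0 0 f) (μ : Measure ℝ) [IsFiniteMeasure μ] :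
    Integrable f μ :=
  (⟨⟨f, hf.1⟩, hf.tendsto_cocompact⟩ : C₀(ℝ, ℝ)).toBCF.integrable μ

end ContinuousLimits

section HalfLines

variable {ι α : Type*} [Preorder α] {l : Filter ι} {Ψ : ι → α → ℝ} {c : ℝ}

lemma tendstoUniformlyOn_Ici_of_monotone (hmono : ∀ t, Monotone (Ψ t))
    (hle : ∀ t x, Ψ t x ≤ c) {a : α} (ha : Tendsto (Ψ · a) l (𝓝 c)) :
    TendstoUniformlyOn Ψ (fun _ => c) l (Ici a) := by
  refine Metric.tendstoUniformlyOn_iff.2 fun ε hε => ?_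
  filter_upwards [ha.eventually (eventually_gt_nhds (sub_lt_self c hε))] with t ht x hx
  rw [Real.dist_eq, abs_of_nonneg (sub_nonneg.2 (hle t x))]
  linarith [hmono t hx]

lemma tendstoUniformlyOn_Iic_of_monotone (hmono : ∀ t, Monotone (Ψ t))
    (hle : ∀ t x, c ≤ Ψ t x) {b : α} (hb : Tendsto (Ψ · b) l (𝓝 c)) :
    TendstoUniformlyOn Ψ (fun _ => c) l (Iic b) := by
  refine Metric.tendstoUniformlyOn_iff.2 fun ε hε => ?_
  filter_upwards [hb.eventually (eventually_lt_nhds (lt_add_of_pos_right c hε))] with t ht x hx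
  rw [Real.dist_eq, abs_sub_comm, abs_of_nonneg (sub_nonneg.2 (hle t x))]
  linarith [hmono t hx]

end HalfLines

lemma continuousLimits_of_forall_continuousLimits_sub {Φ : ℝ → ℝ} {Ψ : ℝ → ℝ → ℝ} {u v : ℝ}
    (hmono : ∀ t, Monotone (Ψ t)) (hΨ : ∀ t x, Ψ t x ∈ Icc u v)
    (hbot : ∀ x, Tendsto (Ψ · x) atTop (𝓝 u)) (htop : ∀ x, Tendsto (Ψ · x) atBot (𝓝 v))
    (hsub : ∀ t, ContinuousLimits 0 0 fun x => Φ x - Ψ t x) : ContinuousLimits u v Φ := by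
  have hconst (l : Filter ℝ) (s : Set ℝ) : TendstoUniformlyOn (fun _ => Φ) Φ l s :=
    fun _ hU => .of_forall fun _ _ _ => refl_mem_uniformity hU
  have hright (a : ℝ) : TendstoUniformlyOn (fun t => Φ - Ψ t) (Φ - fun _ => v) atBot (Ici a) :=
    (hconst _ _).sub
      (tendstoUniformlyOn_Ici_of_monotone hmono (fun t x => (hΨ t x).2) (htop a))
  have hleft : TendstoUniformlyOn (fun t => Φ - Ψ t) (Φ - fun _ => u) atTop (Iic 0) :=
    (hconst _ _).sub
      (tendstoUniformlyOn_Iic_of_monotone hmono (fun t x => (hΨ t x).1) (hbot 0))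
  have hcont : Continuous Φ := continuous_iff_continuousAt.2 fun x => by
    have hon := (hright (x - 1)).continuousOn (.of_forall fun t => (hsub t).1.continuousOn)
    simpa using (hon.continuousAt (Ici_mem_nhds (sub_one_lt x))).add_const v
  have hlim_top : Tendsto (Φ - fun _ => v) atTop (𝓝 0) :=
    (tendstoUniformlyOn_iff_tendstoUniformlyOnFilter.1 (hright 0) |>.mono_right
      (le_principal_iff.2 (Ici_mem_atTop 0))).tendsto_of_eventually_tendsto
      (.of_forall fun t => (hsub t).2.2) tendsto_const_nhds
  have hlim_bot : Tendsto (Φ - fun _ => u) atBot (𝓝 0) :=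
    (tendstoUniformlyOn_iff_tendstoUniformlyOnFilter.1 hleft |>.mono_right
      (le_principal_iff.2 (Iic_mem_atBot 0))).tendsto_of_eventually_tendsto
      (.of_forall fun t => (hsub t).2.1) tendsto_const_nhds
  exact ⟨hcont, by simpa using hlim_bot.add_const u, by simpa using hlim_top.add_const v⟩

lemma tendsto_integral_of_tendsto_const_of_bounded {α E ι : Type*} [MeasurableSpace α]
    [NormedAddCommGroup E] [NormedSpace ℝ E] [CompleteSpace E] {μ : Measure α}
    [IsProbabilityMeasure μ] {l : Filter ι} [l.IsCountablyGenerated] {F : ι → α → E} {c : E}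
    {C : ℝ} (hmeas : ∀ t, AEStronglyMeasurable (F t) μ) (hbound : ∀ t y, ‖F t y‖ ≤ C)
    (hlim : ∀ y, Tendsto (F · y) l (𝓝 c)) : Tendsto (fun t => ∫ y, F t y ∂μ) l (𝓝 c) := by
  simpa using tendsto_integral_filter_of_dominated_convergence (fun _ => C)
    (.of_forall hmeas) (.of_forall fun t => .of_forall (hbound t)) (integrable_const C)
    (.of_forall hlim)

section Kernel

variable {κ : Kernel ℝ ℝ}

lemma ContinuousLimits.integral_kernel_of_zeroAtInfty
    (hC0 : ∀ f : C₀(ℝ, ℝ), Continuous (fun x => ∫ y, f y ∂(κ x)) ∧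
      Tendsto (fun x => ∫ y, f y ∂(κ x)) (cocompact ℝ) (𝓝 0))
    {g : ℝ → ℝ} (hg : ContinuousLimits 0 0 g) :
    ContinuousLimits 0 0 fun x => ∫ y, g y ∂κ x := by
  obtain ⟨hcont, hlim⟩ := hC0 ⟨⟨g, hg.1⟩, hg.tendsto_cocompact⟩
  rw [cocompact_eq_atBot_atTop, tendsto_sup] at hlim
  exact ⟨hcont, hlim⟩

variable [IsMarkovKernel κ]

lemma ContinuousLimits.integral_kernel_of_monotone
    (hK : ∀ g, ContinuousLimits 0 0 g → ContinuousLimits 0 0 fun x => ∫ y, g y ∂κ x)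
    (hmono : ∀ f : ℝ → ℝ, Measurable f → Monotone f → (∃ M, ∀ x, |f x| ≤ M) →
      Monotone (fun x => ∫ y, f y ∂(κ x)))
    {φ : ℝ → ℝ} (hφ : ContinuousLimits 0 1 φ) (hφmono : Monotone φ) :
    ContinuousLimits 0 1 fun x => ∫ y, φ y ∂κ x := by
  have hφt (t : ℝ) := hφ.comp_sub_const t
  have hφt_mono (t : ℝ) : Monotone fun y => φ (y - t) :=
    fun _ _ hab => hφmono (sub_le_sub_right hab t)
  have hbound (t : ℝ) := (hφt t).abs_le_of_monotone (hφt_mono t)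
  refine continuousLimits_of_forall_continuousLimits_sub
    (Ψ := fun t x => ∫ y, φ (y - t) ∂κ x)
    (fun t => hmono _ (hφt t).1.measurable (hφt_mono t) ⟨_, hbound t⟩)
    (fun t x => ?_) (fun x => ?_) (fun x => ?_) (fun t => ?_)
  · exact (convex_Icc 0 1).integral_mem isClosed_Icc
      (.of_forall fun y => hφ.mem_Icc_of_monotone hφmono (y - t))
      ((hφt t).integrable_of_monotone (hφt_mono t) _)
  · exact tendsto_integral_of_tendsto_const_of_bounded (fun t => (hφt t).1.aestronglyMeasurable)
      hbound fun y => hφ.2.1.comp (tendsto_atBot_add_const_left atTop y tendsto_neg_atTop_atBot)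
  · exact tendsto_integral_of_tendsto_const_of_bounded (fun t => (hφt t).1.aestronglyMeasurable)
      hbound fun y => hφ.2.2.comp (tendsto_atTop_add_const_left atBot y tendsto_neg_atBot_atTop)
  · have hdiff := hK _ (by simpa using hφ.sub (hφt t))
    convert hdiff using 1
    ext x
    simpa using (integral_sub (by simpa using hφ.integrable_of_monotone hφmono _)
      ((hφt t).integrable_of_monotone (hφt_mono t) _)).symm

end Kernel

/-- Let `K` be a Markov kernel on `ℝ` that maps `C₀(ℝ)` into `C₀(ℝ)` and maps bounded
non-decreasing Borel functions to non-decreasing functions. Then `K` maps `C_{u,v}(ℝ)`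
into `C_{u,v}(ℝ)`: if `f` is continuous with limits `u` at `−∞` and `v` at `+∞`,
so is `Kf`. -/
theorem stmt11 (κ : Kernel ℝ ℝ) [IsMarkovKernel κ]
    (hC0 : ∀ f : C₀(ℝ, ℝ), Continuous (fun x => ∫ y, f y ∂(κ x)) ∧
      Tendsto (fun x => ∫ y, f y ∂(κ x)) (cocompact ℝ) (nhds 0))
    (hmono : ∀ f : ℝ → ℝ, Measurable f → Monotone f → (∃ M, ∀ x, |f x| ≤ M) →
      Monotone (fun x => ∫ y, f y ∂(κ x))) :
    ∀ (u v : ℝ) (f : ℝ → ℝ), Continuous f →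
      Tendsto f atBot (nhds u) → Tendsto f atTop (nhds v) →
      Continuous (fun x => ∫ y, f y ∂(κ x)) ∧
      Tendsto (fun x => ∫ y, f y ∂(κ x)) atBot (nhds u) ∧
      Tendsto (fun x => ∫ y, f y ∂(κ x)) atTop (nhds v) := by
  intro u v f hfc hfu hfv
  show ContinuousLimits u v fun x => ∫ y, f y ∂κ x
  have hK (g : ℝ → ℝ) (hg : ContinuousLimits 0 0 g) :=
    hg.integral_kernel_of_zeroAtInfty hC0
  have hσ : ContinuousLimits 0 1 Real.sigmoid :=
    ⟨continuous_sigmoid, Real.tendsto_sigmoid_atBot, Real.tendsto_sigmoid_atTop⟩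
  set g : ℝ → ℝ := fun x => f x - u - (v - u) * Real.sigmoid x
  have hg : ContinuousLimits 0 0 g := by
    simpa using ((show ContinuousLimits u v f from ⟨hfc, hfu, hfv⟩).sub (.const u)).sub
      (hσ.const_mul (v - u))
  have hKf (x : ℝ) : ∫ y, f y ∂κ x =
      (∫ y, g y ∂κ x) + u + (v - u) * ∫ y, Real.sigmoid y ∂κ x := by
    have hσint := hσ.integrable_of_monotone Real.sigmoid_monotone (κ x)
    have hfg : f = fun y => g y + u + (v - u) * Real.sigmoid y := by ext y; simp only [g]; ring
    rw [hfg, integral_add (by exact (hg.integrable _).add (integrable_const u)) (hσint.const_mul _),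
      integral_add (hg.integrable _) (integrable_const u), integral_const_mul]
    simp
  simp only [hKf]
  simpa using ((hK g hg).add (.const u)).add
    ((hσ.integral_kernel_of_monotone hK hmono Real.sigmoid_monotone).const_mul (v - u))
end

section
/- If (P_t) is a stochastically monotone Feller Markov semigroup on ℝ, then its extension (P̃_t) to the extended real line ℝ̄, defined by P̃_t(x,·) being the extension of P_t(x,·) for x ∈ ℝ and P̃_t(±∞,·) = δ_{±∞}, is a Feller semigroup on the compact metric space ℝ̄. -/
/-!
Restricted to `ℝ`, every continuous `f` on `[-∞, ∞]` is `g + f(-∞) + (f(∞) - f(-∞)) · ramp` with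
`g ∈ C₀(ℝ)` and `ramp` the clamp of `x` to `[0, 1]`. So uniform convergence `P̃_t f → f` needs,
besides the hypothesis on `C₀`, only one bounded monotone function, which stochastic monotonicity
controls outside a compact interval. Continuity of `x ↦ ∫ f dP̃_t(x, ·)` at real points holds for
every Feller kernel; at `±∞` it says that `P_t(x, ·)` concentrates near `±∞` as `x → ±∞`, which
again follows from monotonicity together with the Feller property.
-/

open MeasureTheory ProbabilityTheory ZeroAtInfty Filter

open Set Topology BoundedContinuousFunction

namespace ProbabilityTheory.Kernel

def IsStochasticallyMonotone (κ : Kernel ℝ ℝ) : Prop :=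
  ∀ f : ℝ → ℝ, Measurable f → Monotone f → (∃ M, ∀ x, |f x| ≤ M) →
    Monotone (fun x => ∫ y, f y ∂(κ x))

def IsFeller (κ : Kernel ℝ ℝ) : Prop :=
  ∀ f : C₀(ℝ, ℝ), Continuous (fun x => ∫ y, f y ∂(κ x)) ∧
    Tendsto (fun x => ∫ y, f y ∂(κ x)) (cocompact ℝ) (𝓝 0)

end ProbabilityTheory.Kernel

def ContinuousMap.toZeroAtInfty {α β : Type*} [TopologicalSpace α] [TopologicalSpace β] [Zero β]
    (f : C(α, β)) (hf : HasCompactSupport f) : C₀(α, β) :=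
  ⟨f, hf.is_zero_at_infty⟩

@[simp]
lemma ContinuousMap.coe_toZeroAtInfty {α β : Type*} [TopologicalSpace α] [TopologicalSpace β]
    [Zero β] (f : C(α, β)) (hf : HasCompactSupport f) : ⇑(f.toZeroAtInfty hf) = f :=
  rfl

section Cutoff

noncomputable def cutoff (a b : ℝ) : C(ℝ, ℝ) :=
  ⟨fun x => max 0 (min 1 (min (x - a + 1) (b + 1 - x))), by fun_prop⟩

variable {a b x : ℝ}

lemma cutoff_nonneg : 0 ≤ cutoff a b x := le_max_left _ _

lemma cutoff_le_one : cutoff a b x ≤ 1 := max_le zero_le_one (min_le_left _ _)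

lemma cutoff_eq_one (hx : x ∈ Icc a b) : cutoff a b x = 1 := by
  simp only [cutoff, ContinuousMap.coe_mk]
  rw [min_eq_left (le_min (by linarith [hx.1]) (by linarith [hx.2])), max_eq_right zero_le_one]

lemma hasCompactSupport_cutoff : HasCompactSupport (cutoff a b) := by
  refine HasCompactSupport.intro (isCompact_Icc (a := a - 1) (b := b + 1)) fun x hx => ?_
  simp only [cutoff, ContinuousMap.coe_mk]
  rw [mem_Icc, not_and_or, not_le, not_le] at hx
  refine max_eq_left ?_
  rcases hx with hx | hx
  · exact (min_le_right _ _).trans ((min_le_left _ _).trans (by linarith))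
  · exact (min_le_right _ _).trans ((min_le_right _ _).trans (by linarith))

lemma tendsto_integral_cutoff (μ : Measure ℝ) [IsProbabilityMeasure μ] :
    Tendsto (fun n : ℝ => ∫ y, cutoff (-n) n y ∂μ) atTop (𝓝 1) := by
  have hlim := tendsto_integral_filter_of_dominated_convergence (μ := μ) (l := atTop)
    (F := fun n y => cutoff (-n) n y) (f := fun _ => 1) (fun _ => 1)
    (Eventually.of_forall fun n => (cutoff (-n) n).continuous.aestronglyMeasurable)
    (Eventually.of_forall fun n => ae_of_all _ fun y => by
      rw [Real.norm_of_nonneg cutoff_nonneg]; exact cutoff_le_one)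
    (integrable_const 1)
    (ae_of_all _ fun y => tendsto_const_nhds.congr' <| by
      filter_upwards [eventually_ge_atTop |y|] with n hn
      exact (cutoff_eq_one ⟨by linarith [neg_abs_le y], (le_abs_self y).trans hn⟩).symm)
  simpa using hlim

lemma measureReal_le_integral_cutoff (μ : Measure ℝ) [IsFiniteMeasure μ] {s : Set ℝ}
    (hs : MeasurableSet s) (hsab : s ⊆ Icc a b) : μ.real s ≤ ∫ y, cutoff a b y ∂μ := by
  rw [← integral_indicator_one hs]
  refine integral_mono ((integrable_const 1).indicator hs)
    ((cutoff a b).continuous.integrable_of_hasCompactSupport hasCompactSupport_cutoff) fun y => ?_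
  by_cases hy : y ∈ s
  · simp [hy, cutoff_eq_one (hsab hy)]
  · simp [hy, cutoff_nonneg]

end Cutoff

section Ramp

noncomputable def ramp : ℝ →ᵇ ℝ :=
  BoundedContinuousFunction.mkOfBound ⟨fun x => max 0 (min 1 x), by fun_prop⟩ 1 fun x y => by
    simp only [ContinuousMap.coe_mk, Real.dist_eq, abs_le]
    constructor <;> linarith [le_max_left 0 (min 1 x), le_max_left 0 (min 1 y),
      max_le zero_le_one (min_le_left 1 x), max_le zero_le_one (min_le_left 1 y)]

lemma ramp_apply (x : ℝ) : ramp x = max 0 (min 1 x) := rfl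

lemma monotone_ramp : Monotone ramp := fun x y hxy => by
  simp only [ramp_apply]; gcongr

lemma tendsto_ramp_atBot : Tendsto ramp atBot (𝓝 0) :=
  tendsto_const_nhds.congr' <| by
    filter_upwards [eventually_le_atBot 0] with x hx
    rw [ramp_apply, min_eq_right (hx.trans zero_le_one), max_eq_left hx]

lemma tendsto_ramp_atTop : Tendsto ramp atTop (𝓝 1) :=
  tendsto_const_nhds.congr' <| by
    filter_upwards [eventually_ge_atTop 1] with x hx
    rw [ramp_apply, min_eq_left hx, max_eq_right zero_le_one]

lemma exists_zeroAtInfty_eq_add_ramp (f : C(EReal, ℝ)) :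
    ∃ g : C₀(ℝ, ℝ), ∀ x : ℝ, f x = g x + f ⊥ + (f ⊤ - f ⊥) * ramp x := by
  have hlim : ∀ {l : Filter ℝ} {e : EReal} {r : ℝ}, Tendsto Real.toEReal l (𝓝 e) →
      Tendsto ramp l (𝓝 r) → Tendsto (fun x : ℝ => f x - f ⊥ - (f ⊤ - f ⊥) * ramp x) l
        (𝓝 (f e - f ⊥ - (f ⊤ - f ⊥) * r)) := fun he hr =>
    (((f.continuous.tendsto _).comp he).sub_const _).sub (hr.const_mul _)
  refine ⟨⟨⟨fun x : ℝ => f x - f ⊥ - (f ⊤ - f ⊥) * ramp x,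
    (f.continuous.comp continuous_coe_real_ereal).sub continuous_const |>.sub
      (continuous_const.mul ramp.continuous)⟩, ?_⟩, fun x => by
    change f x = f x - f ⊥ - (f ⊤ - f ⊥) * ramp x + f ⊥ + (f ⊤ - f ⊥) * ramp x; ring⟩
  rw [cocompact_eq_atBot_atTop, tendsto_sup]
  constructor
  · simpa using hlim EReal.tendsto_coe_atBot tendsto_ramp_atBot
  · simpa using hlim EReal.tendsto_coe_atTop tendsto_ramp_atTop

end Ramp

section ProbabilityMeasure

variable {α : Type*} [TopologicalSpace α] [MeasurableSpace α] [OpensMeasurableSpace α]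

lemma abs_integral_sub_integral_mul_le {μ : Measure α} [IsProbabilityMeasure μ] (u : α →ᵇ ℝ)
    {g : C(α, ℝ)} (hg₀ : ∀ y, 0 ≤ g y) (hg₁ : ∀ y, g y ≤ 1) :
    |∫ y, u y ∂μ - ∫ y, u y * g y ∂μ| ≤ ‖u‖ * (1 - ∫ y, g y ∂μ) := by
  have hg_int : Integrable g μ := Integrable.of_bound g.continuous.aestronglyMeasurable 1
    (ae_of_all _ fun y => by rw [Real.norm_of_nonneg (hg₀ y)]; exact hg₁ y)
  have hu_int : Integrable u μ := u.integrable μ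
  have hug_int : Integrable (fun y => u y * g y) μ :=
    hu_int.mul_bdd g.continuous.aestronglyMeasurable
      (ae_of_all _ fun y => by rw [Real.norm_of_nonneg (hg₀ y)]; exact hg₁ y)
  calc |∫ y, u y ∂μ - ∫ y, u y * g y ∂μ| = ‖∫ y, u y * (1 - g y) ∂μ‖ := by
        rw [← integral_sub hu_int hug_int, Real.norm_eq_abs]
        simp only [mul_one_sub]
    _ ≤ ∫ y, ‖u‖ * (1 - g y) ∂μ := by
        refine norm_integral_le_of_norm_le (((integrable_const 1).sub hg_int).const_mul _)
          (ae_of_all _ fun y => ?_)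
        rw [norm_mul, Real.norm_of_nonneg (sub_nonneg.2 (hg₁ y))]
        exact mul_le_mul_of_nonneg_right (u.norm_coe_le_norm y) (sub_nonneg.2 (hg₁ y))
    _ = ‖u‖ * (1 - ∫ y, g y ∂μ) := by
        rw [integral_const_mul, integral_sub (integrable_const 1) hg_int]
        simp

lemma abs_integral_sub_le_of_eq_one {μ : Measure α} [IsProbabilityMeasure μ] (h : α →ᵇ ℝ)
    {g : C(α, ℝ)} (hg₀ : ∀ y, 0 ≤ g y) (hg₁ : ∀ y, g y ≤ 1) {x : α} (hgx : g x = 1) {δ : ℝ}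
    (hg : |∫ y, g y ∂μ - g x| ≤ δ) (hhg : |∫ y, h y * g y ∂μ - h x * g x| ≤ δ) :
    |∫ y, h y ∂μ - h x| ≤ (‖h‖ + 1) * δ := by
  rw [hgx, mul_one] at hhg
  rw [hgx] at hg
  have hmass : 1 - ∫ y, g y ∂μ ≤ δ := by linarith [neg_abs_le (∫ y, g y ∂μ - 1)]
  calc |∫ y, h y ∂μ - h x|
      ≤ |∫ y, h y ∂μ - ∫ y, h y * g y ∂μ| + |∫ y, h y * g y ∂μ - h x| := abs_sub_le _ _ _
    _ ≤ ‖h‖ * δ + δ := add_le_add ((abs_integral_sub_integral_mul_le h hg₀ hg₁).trans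
        (mul_le_mul_of_nonneg_left hmass (norm_nonneg h))) hhg
    _ = (‖h‖ + 1) * δ := by ring

theorem tendsto_integral_of_tendsto_measureReal_compl {ι : Type*} {l : Filter ι} {F : Filter α}
    {μ : ι → Measure α} [∀ i, IsProbabilityMeasure (μ i)] (u : α →ᵇ ℝ) {A : ℝ}
    (hA : Tendsto u F (𝓝 A))
    (hμ : ∀ s ∈ F, MeasurableSet s → Tendsto (fun i => (μ i).real sᶜ) l (𝓝 0)) :
    Tendsto (fun i => ∫ y, u y ∂μ i) l (𝓝 A) := by
  refine Metric.tendsto_nhds.2 fun ε hε => ?_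
  set s := u ⁻¹' Metric.ball A (ε / 2)
  have hs : MeasurableSet s := (Metric.isOpen_ball.preimage u.continuous).measurableSet
  set C := ‖u‖ + |A|
  have hsmall := (hμ s (hA (Metric.ball_mem_nhds A (half_pos hε))) hs).eventually
    (gt_mem_nhds (show 0 < ε / (2 * (C + 1)) by positivity))
  filter_upwards [hsmall] with i hi
  have hint : Integrable (fun y => u y - A) (μ i) := (u.integrable _).sub (integrable_const A)
  have hin : ‖∫ y in s, (u y - A) ∂μ i‖ ≤ ε / 2 * (μ i).real s :=
    norm_setIntegral_le_of_norm_le_const (measure_lt_top _ _) fun y hy => (Metric.mem_ball.1 hy).le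
  have hout : ‖∫ y in sᶜ, (u y - A) ∂μ i‖ ≤ C * (μ i).real sᶜ :=
    norm_setIntegral_le_of_norm_le_const (measure_lt_top _ _) fun y _ =>
      (norm_sub_le _ _).trans (add_le_add (u.norm_coe_le_norm y) le_rfl)
  have hC : C * (μ i).real sᶜ < ε / 2 := by
    calc C * (μ i).real sᶜ ≤ (C + 1) * (μ i).real sᶜ := by gcongr; linarith
      _ < (C + 1) * (ε / (2 * (C + 1))) := by gcongr
      _ = ε / 2 := by field_simp [show C + 1 ≠ 0 by positivity]
  calc dist (∫ y, u y ∂μ i) A = ‖∫ y in s, (u y - A) ∂μ i + ∫ y in sᶜ, (u y - A) ∂μ i‖ := by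
        rw [integral_add_compl hs hint, integral_sub (u.integrable _) (integrable_const A)]
        simp [dist_eq_norm]
    _ ≤ ε / 2 * (μ i).real s + C * (μ i).real sᶜ := (norm_add_le _ _).trans (add_le_add hin hout)
    _ < ε := by nlinarith [measureReal_le_one (μ := μ i) (s := s)]

lemma tendsto_measureReal_Iic_atBot (μ : Measure ℝ) [IsProbabilityMeasure μ] :
    Tendsto (fun K => μ.real (Iic K)) atBot (𝓝 0) :=
  (tendsto_cdf_atBot μ).congr (cdf_eq_real μ)

lemma tendsto_measureReal_Ioi_atTop (μ : Measure ℝ) [IsProbabilityMeasure μ] :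
    Tendsto (fun K => μ.real (Ioi K)) atTop (𝓝 0) := by
  have h := (tendsto_cdf_atTop μ).const_sub 1
  rw [sub_self] at h
  refine h.congr fun K => ?_
  rw [cdf_eq_real, ← compl_Iic, probReal_compl_eq_one_sub measurableSet_Iic]

end ProbabilityMeasure

namespace ProbabilityTheory.Kernel

section SingleKernel

variable {κ : Kernel ℝ ℝ}

lemma IsStochasticallyMonotone.monotone_measureReal_Ioi (hκ : κ.IsStochasticallyMonotone)
    (c : ℝ) : Monotone fun x => (κ x).real (Ioi c) := by
  have hind : Monotone ((Ioi c).indicator (1 : ℝ → ℝ)) := fun y z hyz => by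
    by_cases hy : c < y
    · simp [Set.indicator, hy, hy.trans_le hyz]
    · by_cases hz : c < z <;> simp [Set.indicator, hy, hz]
  have h := hκ _ (measurable_one.indicator measurableSet_Ioi) hind
    ⟨1, fun y => by by_cases hy : c < y <;> simp [Set.indicator, hy]⟩
  simpa only [integral_indicator_one measurableSet_Ioi] using h

lemma IsStochasticallyMonotone.antitone_measureReal_Iic [IsMarkovKernel κ]
    (hκ : κ.IsStochasticallyMonotone) (c : ℝ) : Antitone fun x => (κ x).real (Iic c) :=
  fun x z hxz => by
    simp only [← compl_Ioi, probReal_compl_eq_one_sub measurableSet_Ioi]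
    linarith [hκ.monotone_measureReal_Ioi c hxz]

variable [IsMarkovKernel κ]

/-- Vague continuity of `x ↦ κ x` upgrades to weak continuity because no mass is lost:
the cutoffs capture almost all of the mass of `κ x₀`, hence of `κ x` for `x` near `x₀`. -/
theorem IsFeller.continuous_integral (hκ : κ.IsFeller) (u : ℝ →ᵇ ℝ) :
    Continuous fun x => ∫ y, u y ∂κ x := by
  refine continuous_iff_continuousAt.2 fun x₀ =>
    continuousAt_of_locally_uniform_approx_of_continuousAt fun V hV => ?_
  obtain ⟨ε, hε, hεV⟩ := Metric.mem_uniformity_dist.1 hV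
  set η := ε / (2 * (‖u‖ + 1)) with hη
  have hη_pos : 0 < η := by positivity
  obtain ⟨n, hn⟩ := ((tendsto_integral_cutoff (κ x₀)).eventually
    (lt_mem_nhds (show 1 - η < 1 by linarith))).exists
  set g := cutoff (-n) n
  have hg_cont := (hκ (g.toZeroAtInfty hasCompactSupport_cutoff)).1
  have hug_cont := (hκ ((u.toContinuousMap * g).toZeroAtInfty hasCompactSupport_cutoff.mul_left)).1
  refine ⟨{x | 1 - 2 * η < ∫ y, g y ∂κ x}, hg_cont.continuousAt.eventually
    (lt_mem_nhds (by simp only [ContinuousMap.coe_toZeroAtInfty]; linarith)),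
    _, hug_cont.continuousAt, fun x hx => hεV ?_⟩
  calc dist (∫ y, u y ∂κ x) (∫ y, u y * g y ∂κ x)
      ≤ ‖u‖ * (1 - ∫ y, g y ∂κ x) :=
        abs_integral_sub_integral_mul_le u (fun _ => cutoff_nonneg) (fun _ => cutoff_le_one)
    _ ≤ ‖u‖ * (2 * η) := by gcongr; linarith [hx.out]
    _ < ε := by
        rw [hη, mul_div_assoc', mul_div_mul_left _ _ two_ne_zero, mul_div_assoc',
          div_lt_iff₀ (by positivity)]
        nlinarith [norm_nonneg u]

/-- Monotonicity keeps the mass of `κ x` left of `m` below that of `κ 0` for `x ≥ 0`, and the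
Feller property sends the mass of `[m, K]` to zero. -/
theorem tendsto_measureReal_Iic_atTop (hmono : κ.IsStochasticallyMonotone) (hfel : κ.IsFeller)
    (K : ℝ) : Tendsto (fun x => (κ x).real (Iic K)) atTop (𝓝 0) := by
  refine tendsto_order.2 ⟨fun a ha => Eventually.of_forall fun x => ha.trans_le measureReal_nonneg,
    fun a ha => ?_⟩
  obtain ⟨m, hm, hmK⟩ := (((tendsto_measureReal_Iic_atBot (κ 0)).eventually
    (gt_mem_nhds (half_pos ha))).and (eventually_le_atBot K)).exists
  have hvanish := ((hfel ((cutoff m K).toZeroAtInfty hasCompactSupport_cutoff)).2.mono_left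
    atTop_le_cocompact).eventually (gt_mem_nhds (half_pos ha))
  filter_upwards [eventually_ge_atTop 0, hvanish] with x hx0 hx
  calc (κ x).real (Iic K) ≤ (κ x).real (Iic m) + (κ x).real (Icc m K) :=
        (measureReal_mono Iic_subset_Iic_union_Icc).trans (measureReal_union_le _ _)
    _ ≤ (κ 0).real (Iic m) + ∫ y, cutoff m K y ∂κ x :=
        add_le_add (hmono.antitone_measureReal_Iic m hx0)
          (measureReal_le_integral_cutoff _ measurableSet_Icc subset_rfl)
    _ < a := by simp only [ContinuousMap.coe_toZeroAtInfty] at hx; linarith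

theorem tendsto_measureReal_Ioi_atBot (hmono : κ.IsStochasticallyMonotone) (hfel : κ.IsFeller)
    (K : ℝ) : Tendsto (fun x => (κ x).real (Ioi K)) atBot (𝓝 0) := by
  refine tendsto_order.2 ⟨fun a ha => Eventually.of_forall fun x => ha.trans_le measureReal_nonneg,
    fun a ha => ?_⟩
  obtain ⟨m, hm, hmK⟩ := (((tendsto_measureReal_Ioi_atTop (κ 0)).eventually
    (gt_mem_nhds (half_pos ha))).and (eventually_ge_atTop K)).exists
  have hvanish := ((hfel ((cutoff K m).toZeroAtInfty hasCompactSupport_cutoff)).2.mono_left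
    atBot_le_cocompact).eventually (gt_mem_nhds (half_pos ha))
  filter_upwards [eventually_le_atBot 0, hvanish] with x hx0 hx
  calc (κ x).real (Ioi K) ≤ (κ x).real (Ioc K m) + (κ x).real (Ioi m) :=
        (measureReal_mono Ioi_subset_Ioc_union_Ioi).trans (measureReal_union_le _ _)
    _ ≤ ∫ y, cutoff K m y ∂κ x + (κ 0).real (Ioi m) :=
        add_le_add (measureReal_le_integral_cutoff _ measurableSet_Ioc Ioc_subset_Icc_self)
          (hmono.monotone_measureReal_Ioi m hx0)
    _ < a := by simp only [ContinuousMap.coe_toZeroAtInfty] at hx; linarith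

theorem tendsto_integral_atTop (hmono : κ.IsStochasticallyMonotone) (hfel : κ.IsFeller)
    (u : ℝ →ᵇ ℝ) {A : ℝ} (hA : Tendsto u atTop (𝓝 A)) :
    Tendsto (fun x => ∫ y, u y ∂κ x) atTop (𝓝 A) :=
  tendsto_integral_of_tendsto_measureReal_compl u hA fun s hs _ => by
    obtain ⟨K, hK⟩ := mem_atTop_sets.1 hs
    refine squeeze_zero (fun _ => measureReal_nonneg) (fun x => measureReal_mono fun y hy => ?_)
      (tendsto_measureReal_Iic_atTop hmono hfel K)
    exact not_lt.1 fun h => hy (hK y h.le)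

theorem tendsto_integral_atBot (hmono : κ.IsStochasticallyMonotone) (hfel : κ.IsFeller)
    (u : ℝ →ᵇ ℝ) {A : ℝ} (hA : Tendsto u atBot (𝓝 A)) :
    Tendsto (fun x => ∫ y, u y ∂κ x) atBot (𝓝 A) :=
  tendsto_integral_of_tendsto_measureReal_compl u hA fun s hs _ => by
    obtain ⟨K, hK⟩ := mem_atBot_sets.1 hs
    refine squeeze_zero (fun _ => measureReal_nonneg) (fun x => measureReal_mono fun y hy => ?_)
      (tendsto_measureReal_Ioi_atBot hmono hfel K)
    exact not_le.1 fun h => hy (hK y h)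

/-- On `[-R, R]` the cutoff reduces the estimate to two `C₀` test functions; beyond `R` the
monotone `h` is squeezed between `h (±R)` and its limit, and so is its integral by stochastic
monotonicity. -/
theorem abs_integral_sub_le_of_monotone (hκ : κ.IsStochasticallyMonotone) (h : ℝ →ᵇ ℝ)
    (hh : Monotone h) {a b R η δ : ℝ} (hR : 0 ≤ R) (ha : ∀ y, a ≤ h y) (hb : ∀ y, h y ≤ b)
    (hRa : h (-R) ≤ a + η) (hRb : b - η ≤ h R)
    (hg : ∀ x, |∫ y, cutoff (-R) R y ∂κ x - cutoff (-R) R x| ≤ δ)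
    (hhg : ∀ x, |∫ y, h y * cutoff (-R) R y ∂κ x - h x * cutoff (-R) R x| ≤ δ) (x : ℝ) :
    |∫ y, h y ∂κ x - h x| ≤ η + (‖h‖ + 1) * δ := by
  have hinner : ∀ z ∈ Icc (-R) R, |∫ y, h y ∂κ z - h z| ≤ (‖h‖ + 1) * δ := fun z hz =>
    abs_integral_sub_le_of_eq_one h (fun _ => cutoff_nonneg) (fun _ => cutoff_le_one)
      (cutoff_eq_one hz) (hg z) (hhg z)
  have hmono : Monotone fun z => ∫ y, h y ∂κ z :=
    hκ h h.continuous.measurable hh ⟨‖h‖, fun y => by simpa using h.norm_coe_le_norm y⟩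
  have hbounds : ∀ z, a ≤ ∫ y, h y ∂κ z ∧ ∫ y, h y ∂κ z ≤ b := fun z =>
    ⟨by simpa using integral_mono (integrable_const a) (h.integrable (κ z)) ha,
      by simpa using integral_mono (h.integrable (κ z)) (integrable_const b) hb⟩
  have hη : 0 ≤ η := by linarith [hb R]
  have hD : 0 ≤ (‖h‖ + 1) * δ := (abs_nonneg _).trans (hinner 0 ⟨by linarith, hR⟩)
  rcases le_or_gt x R with hxR | hRx
  · rcases le_or_gt (-R) x with hRx' | hxR'
    · linarith [hinner x ⟨hRx', hxR⟩]
    · have hleft := abs_le.1 (hinner (-R) ⟨le_rfl, by linarith⟩)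
      have hFx := hmono hxR'.le
      refine abs_le.2 ⟨?_, ?_⟩
      · linarith [(hbounds x).1, hh hxR'.le]
      · linarith [ha x]
  · have hright := abs_le.1 (hinner R ⟨by linarith, le_rfl⟩)
    have hFx := hmono hRx.le
    refine abs_le.2 ⟨?_, ?_⟩
    · linarith [hb x]
    · linarith [(hbounds x).2, hh hRx.le]

end SingleKernel

section Family

variable {ι : Type*} {l : Filter ι} {κ : ι → Kernel ℝ ℝ}

theorem tendstoUniformly_integral_of_monotone
    (hκ : ∀ᶠ i in l, IsMarkovKernel (κ i) ∧ (κ i).IsStochasticallyMonotone)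
    (hC₀ : ∀ g : C₀(ℝ, ℝ), TendstoUniformly (fun i x => ∫ y, g y ∂κ i x) g l)
    (h : ℝ →ᵇ ℝ) (hh : Monotone h) {a b : ℝ} (hbot : Tendsto h atBot (𝓝 a))
    (htop : Tendsto h atTop (𝓝 b)) :
    TendstoUniformly (fun i x => ∫ y, h y ∂κ i x) h l := by
  refine Metric.tendstoUniformly_iff.2 fun ε hε => ?_
  obtain ⟨R, hR, hRa, hRb⟩ := ((eventually_ge_atTop 0).and
    ((tendsto_neg_atTop_atBot.eventually (hbot.eventually (Iio_mem_nhds (by linarith :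
      a < a + ε / 2)))).and (htop.eventually (Ioi_mem_nhds (by linarith : b - ε / 2 < b))))).exists
  set δ := ε / (2 * (‖h‖ + 2)) with hδ
  have hδ_pos : 0 < δ := by positivity
  have hδε : (‖h‖ + 2) * δ = ε / 2 := by
    rw [hδ]; field_simp [show ‖h‖ + 2 ≠ 0 by positivity]
  have hg := Metric.tendstoUniformly_iff.1
    (hC₀ ((cutoff (-R) R).toZeroAtInfty hasCompactSupport_cutoff)) δ hδ_pos
  have hhg := Metric.tendstoUniformly_iff.1
    (hC₀ ((h.toContinuousMap * cutoff (-R) R).toZeroAtInfty hasCompactSupport_cutoff.mul_left))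
    δ hδ_pos
  filter_upwards [hκ, hg, hhg] with i ⟨hmarkov, hmono⟩ hgi hhgi x
  rw [dist_comm, Real.dist_eq]
  calc |∫ y, h y ∂κ i x - h x| ≤ ε / 2 + (‖h‖ + 1) * δ :=
        abs_integral_sub_le_of_monotone hmono h hh hR (hh.le_of_tendsto hbot)
          (hh.ge_of_tendsto htop) (le_of_lt hRa) (le_of_lt hRb)
          (fun z => by rw [← Real.dist_eq, dist_comm]; exact (hgi z).le)
          (fun z => by rw [← Real.dist_eq, dist_comm]; exact (hhgi z).le) x
    _ < ε := by nlinarith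

theorem tendstoUniformly_integral_comp_coe
    (hκ : ∀ᶠ i in l, IsMarkovKernel (κ i) ∧ (κ i).IsStochasticallyMonotone)
    (hC₀ : ∀ g : C₀(ℝ, ℝ), TendstoUniformly (fun i x => ∫ y, g y ∂κ i x) g l)
    (f : C(EReal, ℝ)) :
    TendstoUniformly (fun i (x : ℝ) => ∫ y, f y ∂κ i x) (fun x => f x) l := by
  obtain ⟨g, hg⟩ := exists_zeroAtInfty_eq_add_ramp f
  have hramp := tendstoUniformly_integral_of_monotone hκ hC₀ ramp monotone_ramp
    tendsto_ramp_atBot tendsto_ramp_atTop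
  have hsum := ((hC₀ g).add (tendsto_const_nhds (x := f ⊥)).tendstoUniformly_const).add
    ((Real.uniformContinuous_const_mul (x := f ⊤ - f ⊥)).comp_tendstoUniformly hramp)
  rw [funext hg]
  refine (tendstoUniformly_congr ?_).1 hsum
  filter_upwards [hκ] with i ⟨hmarkov, _⟩
  funext x
  have hg_int : Integrable g (κ i x) := g.toBCF.integrable _
  have hgc_int : Integrable (fun y => g y + f ⊥) (κ i x) := hg_int.add (integrable_const _)
  have hramp_int : Integrable (fun y => (f ⊤ - f ⊥) * ramp y) (κ i x) :=
    (ramp.integrable _).const_mul _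
  simp only [Pi.add_apply, Function.comp_apply]
  rw [integral_add hgc_int hramp_int, integral_add hg_int (integrable_const _),
    MeasureTheory.integral_const, MeasureTheory.integral_const_mul]
  simp

end Family

end ProbabilityTheory.Kernel

lemma EReal.continuous_of_comp_coe {X : Type*} [TopologicalSpace X] {F : EReal → X}
    (hF : Continuous (F ∘ Real.toEReal)) (hbot : Tendsto (F ∘ Real.toEReal) atBot (𝓝 (F ⊥)))
    (htop : Tendsto (F ∘ Real.toEReal) atTop (𝓝 (F ⊤))) : Continuous F := by
  refine continuous_iff_continuousAt.2 fun x => ?_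
  induction x using EReal.rec with
  | bot =>
    rw [ContinuousAt, ← nhdsNE_sup_pure, tendsto_sup, EReal.nhdsWithin_bot, tendsto_map'_iff]
    exact ⟨hbot, tendsto_pure_nhds _ _⟩
  | coe r => exact EReal.isOpenEmbedding_coe.continuousAt_iff.1 hF.continuousAt
  | top =>
    rw [ContinuousAt, ← nhdsNE_sup_pure, tendsto_sup, EReal.nhdsWithin_top, tendsto_map'_iff]
    exact ⟨htop, tendsto_pure_nhds _ _⟩

namespace ProbabilityTheory.Kernel

noncomputable def extendEReal (κ : Kernel ℝ ℝ) : Kernel EReal EReal := by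
  classical
  exact piecewise EReal.measurableEmbedding_coe.measurableSet_range
    ((κ.map Real.toEReal).comap EReal.toReal measurable_ereal_toReal) Kernel.id

variable (κ η : Kernel ℝ ℝ)

lemma extendEReal_coe (x : ℝ) : κ.extendEReal x = (κ x).map Real.toEReal := by
  simp [extendEReal, piecewise_apply, map_apply _ measurable_coe_real_ereal]

lemma extendEReal_bot : κ.extendEReal ⊥ = Measure.dirac ⊥ := by
  simp [extendEReal, piecewise_apply, id_apply]

lemma extendEReal_top : κ.extendEReal ⊤ = Measure.dirac ⊤ := by
  simp [extendEReal, piecewise_apply, id_apply]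

variable {κ} in
instance [IsMarkovKernel κ] : IsMarkovKernel κ.extendEReal := by
  have := IsMarkovKernel.map κ measurable_coe_real_ereal
  unfold extendEReal; infer_instance

lemma extendEReal_id : (Kernel.id : Kernel ℝ ℝ).extendEReal = Kernel.id := by
  ext1 x
  induction x using EReal.rec with
  | bot => exact extendEReal_bot _
  | coe x => rw [extendEReal_coe, id_apply, id_apply, Measure.map_dirac]
  | top => exact extendEReal_top _

lemma extendEReal_comp :
    (η ∘ₖ κ).extendEReal = η.extendEReal ∘ₖ κ.extendEReal := by
  have hcomap : η.extendEReal.comap Real.toEReal measurable_coe_real_ereal =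
      η.map Real.toEReal := by
    ext1 x
    rw [comap_apply, extendEReal_coe, map_apply _ measurable_coe_real_ereal]
  ext1 x
  induction x using EReal.rec with
  | bot => rw [comp_apply, extendEReal_bot, extendEReal_bot,
      Measure.dirac_bind η.extendEReal.measurable, extendEReal_bot]
  | coe x =>
    calc (η ∘ₖ κ).extendEReal x = (η.map Real.toEReal ∘ₖ κ) x := by
          rw [extendEReal_coe, ← map_apply _ measurable_coe_real_ereal, map_comp]
      _ = (η.extendEReal ∘ₖ κ.map Real.toEReal) x := by
          rw [comp_map _ _ measurable_coe_real_ereal, hcomap]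
      _ = (η.extendEReal ∘ₖ κ.extendEReal) x := by
          rw [comp_apply, comp_apply, extendEReal_coe, map_apply _ measurable_coe_real_ereal]
  | top => rw [comp_apply, extendEReal_top, extendEReal_top,
      Measure.dirac_bind η.extendEReal.measurable, extendEReal_top]

lemma integral_extendEReal_coe (f : EReal → ℝ) (x : ℝ) :
    ∫ y, f y ∂κ.extendEReal x = ∫ y, f y ∂κ x := by
  rw [extendEReal_coe, EReal.measurableEmbedding_coe.integral_map]

lemma integral_extendEReal_bot (f : EReal → ℝ) :
    ∫ y, f y ∂κ.extendEReal ⊥ = f ⊥ := by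
  rw [extendEReal_bot, integral_dirac]

lemma integral_extendEReal_top (f : EReal → ℝ) :
    ∫ y, f y ∂κ.extendEReal ⊤ = f ⊤ := by
  rw [extendEReal_top, integral_dirac]

variable {κ} in
theorem continuous_integral_extendEReal [IsMarkovKernel κ] (hmono : κ.IsStochasticallyMonotone)
    (hfel : κ.IsFeller) (f : C(EReal, ℝ)) :
    Continuous fun x => ∫ y, f y ∂κ.extendEReal x := by
  set u : ℝ →ᵇ ℝ := (mkOfCompact f).compContinuous ⟨Real.toEReal, continuous_coe_real_ereal⟩
  have hcomp : (fun x => ∫ y, f y ∂κ.extendEReal x) ∘ Real.toEReal = fun x => ∫ y, u y ∂κ x :=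
    funext (integral_extendEReal_coe κ f)
  refine EReal.continuous_of_comp_coe ?_ ?_ ?_ <;>
    simp only [hcomp, integral_extendEReal_bot, integral_extendEReal_top]
  · exact hfel.continuous_integral u
  · exact tendsto_integral_atBot hmono hfel u
      ((f.continuous.tendsto ⊥).comp EReal.tendsto_coe_atBot)
  · exact tendsto_integral_atTop hmono hfel u
      ((f.continuous.tendsto ⊤).comp EReal.tendsto_coe_atTop)

theorem tendstoUniformly_integral_extendEReal {ι : Type*} {l : Filter ι} {κ : ι → Kernel ℝ ℝ}
    (hκ : ∀ᶠ i in l, IsMarkovKernel (κ i) ∧ (κ i).IsStochasticallyMonotone)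
    (hC₀ : ∀ g : C₀(ℝ, ℝ), TendstoUniformly (fun i x => ∫ y, g y ∂κ i x) g l)
    (f : C(EReal, ℝ)) :
    TendstoUniformly (fun i x => ∫ y, f y ∂(κ i).extendEReal x) f l := by
  refine Metric.tendstoUniformly_iff.2 fun ε hε => ?_
  filter_upwards [Metric.tendstoUniformly_iff.1 (tendstoUniformly_integral_comp_coe hκ hC₀ f) ε hε]
    with i hi x
  induction x using EReal.rec with
  | bot => simpa [integral_extendEReal_bot] using hε
  | coe x => simpa [integral_extendEReal_coe] using hi x
  | top => simpa [integral_extendEReal_top] using hε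

end ProbabilityTheory.Kernel

lemma tendstoUniformly_nhdsGT_zero_iff {α : Type*} {F : ℝ → α → ℝ} {f : α → ℝ} :
    TendstoUniformly F f (𝓝[>] 0) ↔
      ∀ ε > 0, ∃ δ > 0, ∀ t, 0 < t → t < δ → ∀ x, |F t x - f x| ≤ ε := by
  simp_rw [Metric.tendstoUniformly_iff, (nhdsGT_basis (0 : ℝ)).eventually_iff, Real.dist_eq,
    abs_sub_comm (f _)]
  refine ⟨fun h ε hε => ?_, fun h ε hε => ?_⟩
  · obtain ⟨δ, hδ, H⟩ := h ε hε
    exact ⟨δ, hδ, fun t h₀ h₁ x => (H ⟨h₀, h₁⟩ x).le⟩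
  · obtain ⟨δ, hδ, H⟩ := h (ε / 2) (half_pos hε)
    exact ⟨δ, hδ, fun t ht x => (H t ht.1 ht.2 x).trans_lt (half_lt_self hε)⟩

/-- If `(P_t)` is a stochastically monotone Feller Markov semigroup on `ℝ`, then its
extension `(P̃_t)` to the extended real line `ℝ̄` — given by `P̃_t(x,·)` the extension of
`P_t(x,·)` for `x ∈ ℝ` and `P̃_t(±∞,·) = δ_{±∞}` — is a Feller semigroup on the compact
space `ℝ̄`: it maps `C(ℝ̄)` to `C(ℝ̄)` and `P̃_t f → f` uniformly as `t → 0+`. -/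
theorem stmt14 (P : ℝ → Kernel ℝ ℝ)
    (hMarkov : ∀ t, 0 ≤ t → IsMarkovKernel (P t))
    (hP0 : P 0 = Kernel.id)
    (hsemi : ∀ s t, 0 ≤ s → 0 ≤ t → P (s + t) = (P t) ∘ₖ (P s))
    (hFellerA : ∀ t, 0 ≤ t → ∀ f : C₀(ℝ, ℝ),
      Continuous (fun x => ∫ y, f y ∂(P t x)) ∧
      Tendsto (fun x => ∫ y, f y ∂(P t x)) (cocompact ℝ) (nhds 0))
    (hFellerB : ∀ f : C₀(ℝ, ℝ), ∀ ε > (0:ℝ), ∃ δ > (0:ℝ), ∀ t, 0 < t → t < δ →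
      ∀ x : ℝ, |(∫ y, f y ∂(P t x)) - f x| ≤ ε)
    (hmono : ∀ t, 0 ≤ t → ∀ f : ℝ → ℝ, Measurable f → Monotone f →
      (∃ M, ∀ x, |f x| ≤ M) → Monotone (fun x => ∫ y, f y ∂(P t x))) :
    ∃ Q : ℝ → Kernel EReal EReal,
      (∀ t, 0 ≤ t → IsMarkovKernel (Q t)) ∧
      -- `Q t` is the extension of `P t` to `ℝ̄`:
      (∀ t, 0 ≤ t → ∀ x : ℝ, Q t (x : EReal) = (P t x).map Real.toEReal) ∧
      (∀ t, 0 ≤ t → Q t ⊥ = Measure.dirac ⊥ ∧ Q t ⊤ = Measure.dirac ⊤) ∧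
      -- semigroup property:
      (Q 0 = Kernel.id) ∧
      (∀ s t, 0 ≤ s → 0 ≤ t → Q (s + t) = (Q t) ∘ₖ (Q s)) ∧
      -- Feller property on the compact space `ℝ̄`:
      (∀ t, 0 ≤ t → ∀ f : C(EReal, ℝ), Continuous (fun x => ∫ y, f y ∂(Q t x))) ∧
      (∀ f : C(EReal, ℝ), ∀ ε > (0:ℝ), ∃ δ > (0:ℝ), ∀ t, 0 < t → t < δ →
        ∀ x : EReal, |(∫ y, f y ∂(Q t x)) - f x| ≤ ε) := by
  have hκ : ∀ᶠ t in 𝓝[>] (0 : ℝ), IsMarkovKernel (P t) ∧ (P t).IsStochasticallyMonotone :=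
    eventually_nhdsWithin_of_forall fun t ht => ⟨hMarkov t (le_of_lt ht), hmono t (le_of_lt ht)⟩
  have hC₀ : ∀ g : C₀(ℝ, ℝ), TendstoUniformly (fun t x => ∫ y, g y ∂P t x) g (𝓝[>] 0) :=
    fun g => tendstoUniformly_nhdsGT_zero_iff.2 (hFellerB g)
  refine ⟨fun t => (P t).extendEReal, fun t ht => ?_, fun t _ => (P t).extendEReal_coe,
    fun t _ => ⟨(P t).extendEReal_bot, (P t).extendEReal_top⟩, ?_, fun s t hs ht => ?_,
    fun t ht f => ?_, fun f => ?_⟩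
  · have := hMarkov t ht
    infer_instance
  · dsimp only
    rw [hP0, Kernel.extendEReal_id]
  · dsimp only
    rw [hsemi s t hs ht, Kernel.extendEReal_comp]
  · have := hMarkov t ht
    exact Kernel.continuous_integral_extendEReal (hmono t ht) (hFellerA t ht) f
  · exact tendstoUniformly_nhdsGT_zero_iff.1
      (Kernel.tendstoUniformly_integral_extendEReal hκ hC₀ f)
end
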